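/- For every odd positive integer k ≥ 3, the sum over j from 1 to k-1 of tan(πj/k)·csc(2πj/k) equals (k² − 1)/2. -/

import Mathlib

/-!
With `ζ = exp (2πi/k)` and `θ = πj/k`, both `tan θ / sin 2θ = 1 / (2 cos² θ)` and
`2 ζ^j / (1 + ζ^j)² = 1 / (2 cos² θ)`, so the sum is `2 ∑ ζ^j / (1 + ζ^j)²` over the nontrivial
`k`-th roots of unity. Since `z / (1 + z)² = 1 / (1 + z) - 1 / (1 + z)²`, the sum over all `k`-th
roots of unity is read off, at `x = -1`, from the logarithmic derivative
`∑ 1 / (x - ζ^j) = k x^(k-1) / (x^k - 1)` of `x^k - 1` and from its derivative; `k` odd is what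
makes `-1` not a root of unity.
-/

open Finset Real

namespace IsPrimitiveRoot

theorem sub_pow_ne_zero {R : Type*} [CommRing R] {ζ : R} {k : ℕ} (hζ : IsPrimitiveRoot ζ k)
    {x : R} (hx : x ^ k ≠ 1) (j : ℕ) : x - ζ ^ j ≠ 0 := by
  rw [sub_ne_zero]
  rintro rfl
  exact hx (by rw [← pow_mul, mul_comm, pow_mul, hζ.pow_eq_one, one_pow])

open Polynomial in
theorem sum_inv_sub_pow {K : Type*} [Field K] {ζ : K} {k : ℕ} (hζ : IsPrimitiveRoot ζ k)
    {x : K} (hx : x ^ k ≠ 1) :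
    ∑ j ∈ range k, (x - ζ ^ j)⁻¹ = k * x ^ (k - 1) / (x ^ k - 1) := by
  have h := (X_pow_sub_one_splits hζ).eval_derivative_div_eval_of_ne_zero (x := x)
    (by simpa [sub_eq_zero] using hx)
  rw [← nthRoots, hζ.nthRoots_eq (one_pow k)] at h
  simpa [Finset.sum, range_val, derivative_X_pow] using h.symm

variable {𝕜 : Type*} [NontriviallyNormedField 𝕜] {ζ : 𝕜} {k : ℕ}

theorem sum_inv_sub_pow_sq (hζ : IsPrimitiveRoot ζ k) {x : 𝕜} (hx : x ^ k ≠ 1) :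
    ∑ j ∈ range k, ((x - ζ ^ j) ^ 2)⁻¹ =
      ((k * x ^ (k - 1)) ^ 2 - k * (k - 1 : ℕ) * x ^ (k - 2) * (x ^ k - 1)) / (x ^ k - 1) ^ 2 := by
  have hsum : HasDerivAt (fun y ↦ ∑ j ∈ range k, (y - ζ ^ j)⁻¹)
      (∑ j ∈ range k, -((x - ζ ^ j) ^ 2)⁻¹) x :=
    HasDerivAt.fun_sum fun j _ ↦
      (((hasDerivAt_id' x).sub_const (ζ ^ j)).inv (hζ.sub_pow_ne_zero hx j)).congr_deriv
        (by rw [neg_div, one_div])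
  have hquot : HasDerivAt (fun y : 𝕜 ↦ k * y ^ (k - 1) / (y ^ k - 1))
      ((k * ((k - 1 : ℕ) * x ^ (k - 2)) * (x ^ k - 1) - k * x ^ (k - 1) * (k * x ^ (k - 1))) /
        (x ^ k - 1) ^ 2) x :=
    ((hasDerivAt_pow (k - 1) x).const_mul _).div ((hasDerivAt_pow k x).sub_const 1)
      (sub_ne_zero.2 hx)
  have heq : (fun y ↦ ∑ j ∈ range k, (y - ζ ^ j)⁻¹) =ᶠ[nhds x]
      fun y : 𝕜 ↦ k * y ^ (k - 1) / (y ^ k - 1) := by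
    filter_upwards [(continuous_pow k).continuousAt.eventually_ne hx] with y hy
    exact hζ.sum_inv_sub_pow hy
  have hderiv := (hsum.congr_of_eventuallyEq heq.symm).unique hquot
  rw [sum_neg_distrib, neg_eq_iff_eq_neg] at hderiv
  rw [hderiv]
  ring

theorem sum_pow_div_one_add_pow_sq [CharZero 𝕜] (hζ : IsPrimitiveRoot ζ k) (hk : Odd k) :
    ∑ j ∈ range k, ζ ^ j / (1 + ζ ^ j) ^ 2 = (k : 𝕜) ^ 2 / 4 := by
  -- `k = 1` apart, because there `k - 2` truncates to `0`
  obtain rfl | hk3 : k = 1 ∨ 3 ≤ k := by obtain ⟨m, rfl⟩ := hk; omega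
  · obtain rfl := one_right_iff.1 hζ
    norm_num
  have hx : (-1 : 𝕜) ^ k ≠ 1 := by rw [hk.neg_one_pow]; norm_num
  have hsum := hζ.sum_inv_sub_pow hx
  have hsum_sq := hζ.sum_inv_sub_pow_sq hx
  rw [hk.neg_one_pow, (Nat.Odd.sub_odd hk odd_one).neg_one_pow] at hsum hsum_sq
  rw [(Nat.Odd.sub_even (by omega) hk even_two).neg_one_pow, Nat.cast_pred (by omega)] at hsum_sq
  calc ∑ j ∈ range k, ζ ^ j / (1 + ζ ^ j) ^ 2
      = -∑ j ∈ range k, (-1 - ζ ^ j)⁻¹ - ∑ j ∈ range k, ((-1 - ζ ^ j) ^ 2)⁻¹ := by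
        rw [← sum_neg_distrib, ← sum_sub_distrib]
        refine sum_congr rfl fun j _ ↦ ?_
        have hne : -1 - ζ ^ j ≠ 0 := hζ.sub_pow_ne_zero hx j
        have : 1 + ζ ^ j ≠ 0 := by contrapose! hne; linear_combination -hne
        field_simp
        ring
    _ = k ^ 2 / 4 := by
        rw [hsum, hsum_sq]
        ring

end IsPrimitiveRoot

theorem Real.tan_mul_one_div_sin_two_mul {θ : ℝ} (hθ : Real.sin θ ≠ 0) :
    Real.tan θ * (1 / Real.sin (2 * θ)) = 1 / (2 * Real.cos θ ^ 2) := by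
  rw [Real.tan_eq_sin_div_cos, Real.sin_two_mul]
  by_cases hc : Real.cos θ = 0
  · simp [hc]
  field_simp

theorem Complex.exp_two_mul_mul_I_div_one_add_sq (θ : ℂ) :
    Complex.exp (2 * θ * Complex.I) / (1 + Complex.exp (2 * θ * Complex.I)) ^ 2 =
      1 / (4 * Complex.cos θ ^ 2) := by
  have hsq : Complex.exp (2 * θ * Complex.I) = Complex.exp (θ * Complex.I) ^ 2 := by
    rw [sq, ← Complex.exp_add]
    ring_nf
  have hfactor : 1 + Complex.exp (θ * Complex.I) ^ 2 =
      Complex.exp (θ * Complex.I) * (2 * Complex.cos θ) := by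
    rw [Complex.two_cos, mul_add, ← Complex.exp_add, ← Complex.exp_add, sq, ← Complex.exp_add]
    ring_nf
    rw [Complex.exp_zero, add_comm]
  rw [hsq, hfactor, mul_pow, div_mul_cancel_left₀ (pow_ne_zero 2 (Complex.exp_ne_zero _))]
  ring

theorem Real.sin_pi_mul_div_ne_zero {j k : ℕ} (hj : 0 < j) (hjk : j < k) :
    Real.sin (π * j / k) ≠ 0 := by
  have hj0 : (0 : ℝ) < j := by exact_mod_cast hj
  have hk0 : (0 : ℝ) < k := by exact_mod_cast hj.trans hjk
  refine (Real.sin_pos_of_pos_of_lt_pi (by positivity) ?_).ne'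
  rw [div_lt_iff₀ hk0, mul_lt_mul_iff_right₀ pi_pos]
  exact_mod_cast hjk

theorem sum_tan_csc_general (k : ℕ) (hk : Odd k) :
    ∑ j ∈ Finset.Icc 1 (k - 1), Real.tan (π * j / k) * (1 / Real.sin (2 * π * j / k)) =
    ((k : ℝ) ^ 2 - 1) / 2 := by
  set ζ := Complex.exp (2 * π * Complex.I / k)
  have hζ : IsPrimitiveRoot ζ k := Complex.isPrimitiveRoot_exp k hk.pos.ne'
  have hterm : ∀ j ∈ Icc 1 (k - 1),
      ((tan (π * j / k) * (1 / sin (2 * π * j / k)) : ℝ) : ℂ) = 2 * (ζ ^ j / (1 + ζ ^ j) ^ 2) := by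
    intro j hj
    obtain ⟨hj1, hjk⟩ := mem_Icc.1 hj
    have hsin := sin_pi_mul_div_ne_zero hj1 (by omega : j < k)
    have hζj : ζ ^ j = Complex.exp (2 * ((π * j / k : ℝ) : ℂ) * Complex.I) := by
      rw [← Complex.exp_nat_mul]
      push_cast
      ring_nf
    rw [show 2 * π * j / k = 2 * (π * j / k) by ring, tan_mul_one_div_sin_two_mul hsin, hζj,
      Complex.exp_two_mul_mul_I_div_one_add_sq]
    push_cast
    ring
  have hIcc : Icc 1 (k - 1) = (range k).erase 0 := by
    ext j
    simp only [mem_Icc, mem_erase, mem_range]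
    omega
  apply Complex.ofReal_injective
  rw [Complex.ofReal_sum, sum_congr rfl hterm, ← mul_sum, hIcc,
    sum_erase_eq_sub (mem_range.2 hk.pos), hζ.sum_pow_div_one_add_pow_sq hk]
  push_cast
  ring

theorem sum_tan_csc (k : ℕ) (hk : Odd k) (hk3 : 3 ≤ k) :
    ∑ j ∈ Finset.Icc 1 (k - 1), Real.tan (π * j / k) * (1 / Real.sin (2 * π * j / k)) =
    ((k : ℝ) ^ 2 - 1) / 2 :=
  sum_tan_csc_general k hk
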